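/- arXiv:2409.12607 — 2 statements merged into one kernel-verified Lean document; each statement's English description precedes it below -/
import Mathlib

section
/- Let φ : [-α,α] → ℝ be a C² solution of φ'' + σφ' + g(φ)u'φ' + g(φ)φ(1-φ) = 0 with φ(-α)=1, φ(α)=0, where g : ℝ → [0,1] is continuous with g = 0 on (-∞,θ] and g ≥ 0, u ∈ C¹, σ ∈ ℝ. Then φ(ξ) ≤ 1 for all ξ ∈ [-α,α]. -/
/-!
Suppose `φ` exceeds `1` and let `ξ` be an interior maximum point, so `φ' ξ = 0`, and let `m < ξ`
be the last point before `ξ` with `φ m ≤ 1`. On `(m, ξ)` the equation reads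
`φ'' + (σ + g(φ) u') φ' = g(φ) φ (φ - 1) ≥ 0`, so with the integrating factor `e^F`,
`F' = σ + g(φ) u'`, the product `φ' e^F` is nondecreasing there and vanishes at `ξ`.
Hence `φ' ≤ 0` on `[m, ξ]`, and `φ m ≥ φ ξ > 1`, a contradiction.
-/

open Set

theorem exists_last_le_of_continuousOn {α β : Type*} [ConditionallyCompleteLinearOrder α]
    [TopologicalSpace α] [OrderTopology α] [LinearOrder β] [TopologicalSpace β]
    [OrderClosedTopology β] {f : α → β} {a b : α} {c : β} (hab : a ≤ b)
    (hf : ContinuousOn f (Icc a b)) (ha : f a ≤ c) :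
    ∃ m ∈ Icc a b, f m ≤ c ∧ ∀ x ∈ Ioc m b, c < f x := by
  set S := Icc a b ∩ f ⁻¹' Iic c
  have hS_closed : IsClosed S := hf.preimage_isClosed_of_isClosed isClosed_Icc isClosed_Iic
  have hS_bdd : BddAbove S := ⟨b, fun x hx => hx.1.2⟩
  have hm : sSup S ∈ S := hS_closed.csSup_mem ⟨a, ⟨left_mem_Icc.2 hab, ha⟩⟩ hS_bdd
  refine ⟨sSup S, hm.1, hm.2, fun x hx => lt_of_not_ge fun hxc => ?_⟩
  have hxS : x ∈ S := ⟨⟨hm.1.1.trans hx.1.le, hx.2⟩, hxc⟩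
  exact (le_csSup hS_bdd hxS).not_gt hx.1

theorem nonpos_of_deriv_add_mul_nonneg {v v' B : ℝ → ℝ} {a b : ℝ}
    (hB : ContinuousOn B (Icc a b)) (hv : ∀ x ∈ Icc a b, HasDerivAt v (v' x) x)
    (hineq : ∀ x ∈ Ioo a b, 0 ≤ v' x + B x * v x) (hb : v b = 0) :
    ∀ x ∈ Icc a b, v x ≤ 0 := by
  intro x hx
  have hab : a ≤ b := hx.1.trans hx.2
  set Bext := IccExtend hab ((Icc a b).domRestrict B)
  have hBext : ∀ y ∈ Icc a b, Bext y = B y := fun y hy => IccExtend_of_mem hab _ hy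
  set F := fun y => ∫ t in a..y, Bext t
  have hBext_cont : Continuous Bext := (continuousOn_iff_continuous_domRestrict.1 hB).Icc_extend'
  have hF : ∀ y, HasDerivAt F (Bext y) y := fun y =>
    (hBext_cont.integral_hasStrictDerivAt a y).hasDerivAt
  set w := fun y => v y * Real.exp (F y)
  set w' := fun y => (v' y + B y * v y) * Real.exp (F y)
  have hw : ∀ y ∈ Icc a b, HasDerivAt w (w' y) y := fun y hy =>
    ((hv y hy).mul (hF y).exp).congr_deriv (by rw [hBext y hy]; ring)
  have hw_mono : MonotoneOn w (Icc a b) := by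
    refine monotoneOn_of_hasDerivWithinAt_nonneg (f' := w') (convex_Icc a b)
      (fun y hy => (hw y hy).continuousAt.continuousWithinAt) (fun y hy => ?_) (fun y hy => ?_)
    all_goals rw [interior_Icc] at hy
    · exact (hw y (Ioo_subset_Icc_self hy)).hasDerivWithinAt
    · exact mul_nonneg (hineq y hy) (Real.exp_pos _).le
  have hwx : v x * Real.exp (F x) ≤ 0 := by
    simpa [w, hb] using hw_mono hx (right_mem_Icc.2 hab) hx.2
  exact nonpos_of_mul_nonpos_left hwx (Real.exp_pos _)

theorem antitoneOn_Icc_of_hasDerivAt_nonpos {f f' : ℝ → ℝ} {a b : ℝ}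
    (hf : ∀ x ∈ Icc a b, HasDerivAt f (f' x) x) (hf' : ∀ x ∈ Icc a b, f' x ≤ 0) :
    AntitoneOn f (Icc a b) := by
  refine antitoneOn_of_hasDerivWithinAt_nonpos (f' := f') (convex_Icc a b)
    (fun x hx => (hf x hx).continuousAt.continuousWithinAt) (fun x hx => ?_) (fun x hx => ?_)
  all_goals rw [interior_Icc] at hx
  · exact (hf x (Ioo_subset_Icc_self hx)).hasDerivWithinAt
  · exact hf' x (Ioo_subset_Icc_self hx)

theorem phi_le_one_general (α σ : ℝ)
    (g : ℝ → ℝ) (hgc : Continuous g) (hg0 : ∀ s, 0 ≤ g s)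
    (u' : ℝ → ℝ)
    (hu'c : ContinuousOn u' (Set.Icc (-α) α))
    (φ φ' φ'' : ℝ → ℝ)
    (hφ1 : ∀ x ∈ Set.Icc (-α) α, HasDerivAt φ (φ' x) x)
    (hφ2 : ∀ x ∈ Set.Icc (-α) α, HasDerivAt φ' (φ'' x) x)
    (hode : ∀ x ∈ Set.Icc (-α) α,
      φ'' x + σ * φ' x + g (φ x) * u' x * φ' x + g (φ x) * φ x * (1 - φ x) = 0)
    (hbc1 : φ (-α) = 1) (hbc2 : φ α = 0) :
    ∀ x ∈ Set.Icc (-α) α, φ x ≤ 1 := by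
  by_contra! ⟨x₀, hx₀, hx₀_gt⟩
  have hφc : ContinuousOn φ (Icc (-α) α) := fun x hx => (hφ1 x hx).continuousAt.continuousWithinAt
  obtain ⟨ξ, hξ, hξ_max⟩ :=
    isCompact_Icc.exists_isMaxOn (nonempty_Icc.2 (hx₀.1.trans hx₀.2)) hφc
  have hξ_gt : 1 < φ ξ := hx₀_gt.trans_le (hξ_max hx₀)
  have hξ_lo : -α < ξ := hξ.1.lt_of_ne (by rintro rfl; linarith)
  have hξ_hi : ξ < α := hξ.2.lt_of_ne (by rintro rfl; linarith)
  have hφ'ξ : φ' ξ = 0 :=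
    (hξ_max.isLocalMax (Icc_mem_nhds hξ_lo hξ_hi)).hasDerivAt_eq_zero (hφ1 ξ hξ)
  have hsub : Icc (-α) ξ ⊆ Icc (-α) α := Icc_subset_Icc_right hξ.2
  obtain ⟨m, hm, hm_le, hgt⟩ := exists_last_le_of_continuousOn hξ.1 (hφc.mono hsub) hbc1.le
  have hsub' : Icc m ξ ⊆ Icc (-α) α := (Icc_subset_Icc_left hm.1).trans hsub
  have hφ''_add : ∀ x ∈ Ioo m ξ, 0 ≤ φ'' x + (σ + g (φ x) * u' x) * φ' x := fun x hx => by
    have hφx := hgt x (Ioo_subset_Ioc_self hx)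
    have hsource : 0 ≤ g (φ x) * φ x * (φ x - 1) :=
      mul_nonneg (mul_nonneg (hg0 (φ x)) (by linarith)) (by linarith)
    linarith [hode x (hsub' (Ioo_subset_Icc_self hx))]
  have hB : ContinuousOn (fun x => σ + g (φ x) * u' x) (Icc m ξ) :=
    (continuousOn_const.add ((hgc.comp_continuousOn hφc).mul hu'c)).mono hsub'
  have hφ'_nonpos : ∀ x ∈ Icc m ξ, φ' x ≤ 0 :=
    nonpos_of_deriv_add_mul_nonneg hB (fun x hx => hφ2 x (hsub' hx)) hφ''_add hφ'ξ
  have := antitoneOn_Icc_of_hasDerivAt_nonpos (fun x hx => hφ1 x (hsub' hx)) hφ'_nonpos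
    (left_mem_Icc.2 hm.2) (right_mem_Icc.2 hm.2) hm.2
  linarith

theorem phi_le_one (α θ σ : ℝ) (hα : 0 < α) (hθ0 : 0 < θ) (hθ1 : θ < 1)
    (g : ℝ → ℝ) (hgc : Continuous g) (hg0 : ∀ s, 0 ≤ g s) (hg1 : ∀ s, g s ≤ 1)
    (hgθ : ∀ s, s ≤ θ → g s = 0)
    (u u' : ℝ → ℝ) (hu : ∀ x ∈ Set.Icc (-α) α, HasDerivAt u (u' x) x)
    (hu'c : ContinuousOn u' (Set.Icc (-α) α))
    (φ φ' φ'' : ℝ → ℝ)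
    (hφ1 : ∀ x ∈ Set.Icc (-α) α, HasDerivAt φ (φ' x) x)
    (hφ2 : ∀ x ∈ Set.Icc (-α) α, HasDerivAt φ' (φ'' x) x)
    (hφ''c : ContinuousOn φ'' (Set.Icc (-α) α))
    (hode : ∀ x ∈ Set.Icc (-α) α,
      φ'' x + σ * φ' x + g (φ x) * u' x * φ' x + g (φ x) * φ x * (1 - φ x) = 0)
    (hbc1 : φ (-α) = 1) (hbc2 : φ α = 0) :
    ∀ x ∈ Set.Icc (-α) α, φ x ≤ 1 :=
  phi_le_one_general α σ g hgc hg0 u' hu'c φ φ' φ'' hφ1 hφ2 hode hbc1 hbc2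
end

section
/- (Revisited LaSalle invariance) Let f : ℝ^N → ℝ^N be continuous, V : ℝ^N → ℝ be C¹, and x : [α,∞) → ℝ^N a bounded solution of x' = f(x). If V(x(t)) → L as t → ∞, then (d/dt)V(x(t)) → 0 as t → ∞. -/
/-!
Along the trajectory, `V ∘ x` has derivative `g t = V' (x t) (f (x t))`. The orbit lies in the
compact closure `K` of `x '' [α, ∞)`, on which `f` is bounded, so `x` is Lipschitz; and
`p ↦ V' p (f p)` is uniformly continuous on `K`, hence `g` is uniformly continuous. Barbalat's
lemma then applies: if `g t` stayed away from `0` for arbitrarily large `t`, uniform continuity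
would keep it away from `0` on intervals of a fixed length, giving increments of `V ∘ x` that
are bounded away from `0`, against the convergence of `V ∘ x`.
-/

open Filter Set Topology

section Barbalat

variable {E : Type*} [NormedAddCommGroup E] [NormedSpace ℝ E]

theorem norm_sub_sub_smul_le_of_hasDerivAt {h g : ℝ → E} {a b C : ℝ} (hab : a ≤ b)
    (hderiv : ∀ s ∈ Icc a b, HasDerivAt h (g s) s) (bound : ∀ s ∈ Icc a b, ‖g s - g a‖ ≤ C) :
    ‖h b - h a - (b - a) • g a‖ ≤ C * (b - a) := by
  have key := (convex_Icc a b).norm_image_sub_le_of_norm_hasDerivWithin_le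
    (f := fun s => h s - s • g a) (f' := fun s => g s - g a)
    (fun s hs => by
      have hsub := (hderiv s hs).sub ((hasDerivAt_id' s).smul_const (g a))
      rw [one_smul] at hsub
      exact hsub.hasDerivWithinAt)
    bound (left_mem_Icc.2 hab) (right_mem_Icc.2 hab)
  rw [Real.norm_of_nonneg (sub_nonneg.2 hab)] at key
  convert key using 2
  rw [sub_smul]
  abel

/-- Barbalat's lemma. -/
theorem tendsto_zero_of_hasDerivAt_of_uniformContinuousOn {h g : ℝ → E} {α : ℝ} {L : E}
    (hderiv : ∀ t, α ≤ t → HasDerivAt h (g t) t) (hg : UniformContinuousOn g (Ici α))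
    (hlim : Tendsto h atTop (𝓝 L)) : Tendsto g atTop (𝓝 0) := by
  rw [Metric.tendsto_atTop]
  intro ε hε
  obtain ⟨δ, hδ, hgδ⟩ := Metric.uniformContinuousOn_iff.1 hg (ε / 2) (half_pos hε)
  set d := δ / 2 with hd_def
  have hd : 0 < d := half_pos hδ
  obtain ⟨T, hT⟩ := Metric.tendsto_atTop.1 hlim (ε * d / 4) (by positivity)
  refine ⟨max T α, fun t ht => ?_⟩
  have htT : T ≤ t := le_of_max_le_left ht
  have htα : α ≤ t := le_of_max_le_right ht
  have hosc : ‖h (t + d) - h t - (t + d - t) • g t‖ ≤ ε / 2 * (t + d - t) := by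
    refine norm_sub_sub_smul_le_of_hasDerivAt (by linarith) (fun s hs => hderiv s (htα.trans hs.1))
      (fun s hs => ?_)
    rw [← dist_eq_norm]
    refine (hgδ s (htα.trans hs.1) t htα ?_).le
    rw [Real.dist_eq, abs_of_nonneg (by linarith [hs.1])]
    linarith [hs.2]
  have hincr : ‖h (t + d) - h t‖ < ε * d / 2 := by
    rw [← dist_eq_norm]
    linarith [dist_triangle_right (h (t + d)) (h t) L, hT t htT, hT (t + d) (by linarith)]
  rw [add_sub_cancel_left] at hosc
  have hscaled : d * ‖g t‖ < d * ε := by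
    calc d * ‖g t‖ = ‖d • g t‖ := by rw [norm_smul, Real.norm_of_nonneg hd.le]
      _ ≤ ‖h (t + d) - h t‖ + ‖h (t + d) - h t - d • g t‖ := norm_le_insert _ _
      _ < d * ε := by linarith
  rw [dist_zero_right]
  exact lt_of_mul_lt_mul_left hscaled hd.le

end Barbalat

section Trajectory

variable {E : Type*} [NormedAddCommGroup E] [NormedSpace ℝ E] [ProperSpace E]

theorem uniformContinuousOn_of_hasDerivAt_of_isBounded {f : E → E} (hf : Continuous f)
    {x : ℝ → E} {α : ℝ} (hx : ∀ t, α ≤ t → HasDerivAt x (f (x t)) t)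
    (hbdd : Bornology.IsBounded (x '' Ici α)) : UniformContinuousOn x (Ici α) := by
  obtain ⟨M, hM⟩ := hbdd.isCompact_closure.exists_bound_of_continuousOn hf.continuousOn
  have hbound : ∀ t ∈ Ici α, ‖f (x t)‖₊ ≤ ⟨max M 0, le_max_right _ _⟩ := fun t ht =>
    (hM _ (subset_closure (mem_image_of_mem x ht))).trans (le_max_left _ _)
  exact ((convex_Ici α).lipschitzOnWith_of_nnnorm_hasDerivWithin_le
    (fun t ht => (hx t ht).hasDerivWithinAt) hbound).uniformContinuousOn

end Trajectory

theorem lasalle_revisited (N : ℕ) (α : ℝ)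
    (f : (Fin N → ℝ) → (Fin N → ℝ)) (hf : Continuous f)
    (V : (Fin N → ℝ) → ℝ) (V' : (Fin N → ℝ) → ((Fin N → ℝ) →L[ℝ] ℝ))
    (hV : ∀ p, HasFDerivAt V (V' p) p) (hV'c : Continuous V')
    (x : ℝ → (Fin N → ℝ))
    (hx : ∀ t, α ≤ t → HasDerivAt x (f (x t)) t)
    (hbdd : Bornology.IsBounded (x '' Set.Ici α))
    (L : ℝ)
    (hlim : Filter.Tendsto (fun t => V (x t)) Filter.atTop (nhds L)) :
    Filter.Tendsto (fun t => V' (x t) (f (x t))) Filter.atTop (nhds 0) := by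
  have hVf : UniformContinuousOn (fun p => V' p (f p)) (closure (x '' Ici α)) :=
    hbdd.isCompact_closure.uniformContinuousOn_of_continuous (hV'c.clm_apply hf).continuousOn
  have hx_mem : MapsTo x (Ici α) (closure (x '' Ici α)) := fun t ht =>
    subset_closure (mem_image_of_mem x ht)
  exact tendsto_zero_of_hasDerivAt_of_uniformContinuousOn
    (fun t ht => (hV (x t)).comp_hasDerivAt t (hx t ht))
    (hVf.comp (uniformContinuousOn_of_hasDerivAt_of_isBounded hf hx hbdd) hx_mem) hlim
end
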